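/- arXiv:1701.01337 — 2 statements merged into one kernel-verified Lean document; each statement's English description precedes it below -/
import Mathlib

section
/- For every graph G, Boppana's objective h(G) has the semidefinite-programming characterization h(G) = |E|/2 − p(G)/4, where p(G) = inf { n·z − 𝟙ᵀd : z ∈ ℝ, d ∈ ℝ^n, and the matrix z·I − P·(A + diag(d))·P is positive semidefinite }, with P = I − J/n. -/
open Matrix BigOperators Finset

noncomputable section

/-- Adjacency matrix of a graph on `Fin n`, with real entries. -/
def adjA {n : ℕ} (G : SimpleGraph (Fin n)) [DecidableRel G.Adj] :
    Matrix (Fin n) (Fin n) ℝ :=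
  Matrix.of fun i j => if G.Adj i j then (1 : ℝ) else 0

/-- A bisection vector: entries in `{+1, -1}` summing to zero. -/
def IsBisection {n : ℕ} (x : Fin n → ℝ) : Prop :=
  (∀ i, x i = 1 ∨ x i = -1) ∧ ∑ i, x i = 0

/-- Cut width of a `±1` vector: `∑_{{i,j}∈E} (1 - x_i x_j)/2`, written as a sum
over ordered pairs (each edge counted twice, hence the `/4`). -/
def cw {n : ℕ} (G : SimpleGraph (Fin n)) [DecidableRel G.Adj] (x : Fin n → ℝ) : ℝ :=
  (∑ i, ∑ j, adjA G i j * (1 - x i * x j)) / 4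

/-- Bisection width: minimum cut width over all bisection vectors. -/
def bw {n : ℕ} (G : SimpleGraph (Fin n)) [DecidableRel G.Adj] : ℝ :=
  sInf {c | ∃ x : Fin n → ℝ, IsBisection x ∧ cw G x = c}

/-- `λ_S(B)`: supremum of the Rayleigh quotient of `B` over nonzero vectors of
coordinate sum zero. -/
def lamS {n : ℕ} (B : Matrix (Fin n) (Fin n) ℝ) : ℝ :=
  sSup {r | ∃ x : Fin n → ℝ, x ≠ 0 ∧ ∑ i, x i = 0 ∧
    r = (x ⬝ᵥ B.mulVec x) / (∑ i, (x i) ^ 2)}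

/-- Sum of all entries of a matrix. -/
def msum {n : ℕ} (M : Matrix (Fin n) (Fin n) ℝ) : ℝ := ∑ i, ∑ j, M i j

/-- Boppana's function `g(G,d)`. -/
def gB {n : ℕ} (G : SimpleGraph (Fin n)) [DecidableRel G.Adj] (d : Fin n → ℝ) : ℝ :=
  (msum (adjA G + Matrix.diagonal d) - n * lamS (adjA G + Matrix.diagonal d)) / 4

/-- Boppana's lower bound `h(G) = sup_d g(G,d)`. -/
def hB {n : ℕ} (G : SimpleGraph (Fin n)) [DecidableRel G.Adj] : ℝ :=
  sSup {r | ∃ d : Fin n → ℝ, r = gB G d}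

/-- Number of edges of `G`. -/
def edgeCount {n : ℕ} (G : SimpleGraph (Fin n)) [DecidableRel G.Adj] : ℕ :=
  G.edgeFinset.card

/-- The all-ones matrix `J`. -/
def Jmat (n : ℕ) : Matrix (Fin n) (Fin n) ℝ := Matrix.of fun _ _ => (1 : ℝ)

/-- The projection matrix `P = I - J/n`. -/
def Pmat (n : ℕ) : Matrix (Fin n) (Fin n) ℝ := 1 - (n : ℝ)⁻¹ • Jmat n

/-- The primal SDP value `p(G)` for Boppana's optimization. -/
def pSDP {n : ℕ} (G : SimpleGraph (Fin n)) [DecidableRel G.Adj] : ℝ :=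
  sInf {r | ∃ (z : ℝ) (d : Fin n → ℝ),
    (z • (1 : Matrix (Fin n) (Fin n) ℝ)
      - Pmat n * (adjA G + Matrix.diagonal d) * Pmat n).PosSemidef ∧
    r = (n : ℝ) * z - ∑ i, d i}

/-! For symmetric `B`, the matrix `z I - P B P` is positive semidefinite iff `z ≥ 0` and
`xᵀ B x ≤ z ‖x‖²` on `S`, since `P` is the orthogonal projection onto `S`; that is, iff
`z ≥ max 0 (λ_S B)`. Replacing `d` by `d + t 𝟙` and `z` by `z + t` shifts `λ_S` by `t` and leaves
`n z - 𝟙ᵀ d` unchanged, so the constraint `z ≥ 0` costs nothing and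
`p(G) = inf_d (n λ_S(A + diag d) - 𝟙ᵀ d) = 2|E| - 4 h(G)`. Both extrema are finite: testing
`λ_S` on the vectors `e_i - e_{i+1}` gives `n λ_S(A + diag d) - 𝟙ᵀ d ≥ -n`. -/

lemma single_sub_single_ne_zero {ι : Type*} [DecidableEq ι] {i j : ι} (hij : i ≠ j) :
    (Pi.single i 1 - Pi.single j 1 : ι → ℝ) ≠ 0 := by
  intro h
  simpa [hij] using congrFun h i

section QuadraticForm

variable {ι : Type*} [Fintype ι]

lemma sum_sq_pos {x : ι → ℝ} (hx : x ≠ 0) : 0 < ∑ i, x i ^ 2 := by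
  obtain ⟨i, hi⟩ := Function.ne_iff.mp hx
  exact sum_pos' (fun k _ => sq_nonneg (x k)) ⟨i, mem_univ i, pow_two_pos_of_ne_zero hi⟩

lemma dotProduct_mulVec_le_sum_abs_mul (B : Matrix ι ι ℝ) (x : ι → ℝ) :
    x ⬝ᵥ B *ᵥ x ≤ (∑ i, ∑ j, |B i j|) * ∑ k, x k ^ 2 := by
  have hx : ∀ i j, |x i| * |x j| ≤ ∑ k, x k ^ 2 := fun i j => by
    have hi := single_le_sum (fun k _ => sq_nonneg (x k)) (mem_univ i)
    have hj := single_le_sum (fun k _ => sq_nonneg (x k)) (mem_univ j)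
    nlinarith [two_mul_le_add_sq |x i| |x j|, sq_abs (x i), sq_abs (x j)]
  simp only [dotProduct, mulVec]
  rw [sum_mul]
  refine sum_le_sum fun i _ => ?_
  rw [mul_sum, sum_mul]
  refine sum_le_sum fun j _ => ?_
  calc x i * (B i j * x j) ≤ |x i * (B i j * x j)| := le_abs_self _
    _ = |B i j| * (|x i| * |x j|) := by rw [abs_mul, abs_mul]; ring
    _ ≤ |B i j| * ∑ k, x k ^ 2 := by gcongr; exact hx i j

variable [DecidableEq ι] (B : Matrix ι ι ℝ) {i j : ι}

lemma sum_single_sub_single : ∑ k, (Pi.single i 1 - Pi.single j 1 : ι → ℝ) k = 0 := by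
  simp [sum_sub_distrib]

lemma sum_sq_single_sub_single (hij : i ≠ j) :
    ∑ k, (Pi.single i 1 - Pi.single j 1 : ι → ℝ) k ^ 2 = 2 := by
  simp [sub_sq, sum_add_distrib, sum_sub_distrib, Pi.single_apply, hij.symm]
  norm_num

lemma dotProduct_mulVec_single_sub_single :
    let x : ι → ℝ := Pi.single i 1 - Pi.single j 1
    x ⬝ᵥ B *ᵥ x = B i i + B j j - B i j - B j i := by
  simp [mulVec_sub, dotProduct_sub, sub_dotProduct]
  ring

end QuadraticForm

section RayleighQuotient

variable {n : ℕ} (B : Matrix (Fin n) (Fin n) ℝ)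

lemma rayleigh_le_lamS {x : Fin n → ℝ} (hx0 : x ≠ 0) (hx : ∑ i, x i = 0) :
    x ⬝ᵥ B *ᵥ x / ∑ i, x i ^ 2 ≤ lamS B := by
  refine le_csSup ⟨∑ i, ∑ j, |B i j|, ?_⟩ ⟨x, hx0, hx, rfl⟩
  rintro _ ⟨y, hy0, -, rfl⟩
  exact (div_le_iff₀ (sum_sq_pos hy0)).2 (dotProduct_mulVec_le_sum_abs_mul B y)

lemma dotProduct_mulVec_le_lamS_mul {x : Fin n → ℝ} (hx : ∑ i, x i = 0) :
    x ⬝ᵥ B *ᵥ x ≤ lamS B * ∑ i, x i ^ 2 := by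
  rcases eq_or_ne x 0 with rfl | hx0
  · simp
  · exact (div_le_iff₀ (sum_sq_pos hx0)).1 (rayleigh_le_lamS B hx0 hx)

lemma lamS_le_of_forall {z : ℝ} (hn : 2 ≤ n)
    (h : ∀ x : Fin n → ℝ, ∑ i, x i = 0 → x ⬝ᵥ B *ᵥ x ≤ z * ∑ i, x i ^ 2) : lamS B ≤ z := by
  have : Nontrivial (Fin n) := Fin.nontrivial_iff_two_le.2 hn
  obtain ⟨i, j, hij⟩ := exists_pair_ne (Fin n)
  refine csSup_le ⟨_, _, single_sub_single_ne_zero hij, sum_single_sub_single, rfl⟩ ?_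
  rintro _ ⟨x, hx0, hx, rfl⟩
  exact (div_le_iff₀ (sum_sq_pos hx0)).2 (h x hx)

lemma diag_sub_offDiag_le_lamS {i j : Fin n} (hij : i ≠ j) :
    (B i i + B j j - B i j - B j i) / 2 ≤ lamS B := by
  have := rayleigh_le_lamS B (single_sub_single_ne_zero hij) sum_single_sub_single
  rwa [dotProduct_mulVec_single_sub_single, sum_sq_single_sub_single hij] at this

end RayleighQuotient

section Projection

variable {n : ℕ}

lemma Pmat_mulVec_apply (v : Fin n → ℝ) (i : Fin n) :
    (Pmat n *ᵥ v) i = v i - (n : ℝ)⁻¹ * ∑ j, v j := by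
  rw [Pmat, sub_mulVec, one_mulVec, smul_mulVec]
  simp [Jmat, mulVec, dotProduct]

lemma isSymm_Pmat : (Pmat n).IsSymm := by
  ext i j
  simp [Pmat, Jmat, one_apply, eq_comm]

lemma Pmat_mulVec_of_sum_eq_zero {x : Fin n → ℝ} (hx : ∑ i, x i = 0) : Pmat n *ᵥ x = x := by
  ext i
  simp [Pmat_mulVec_apply, hx]

lemma sum_Pmat_mulVec (hn : n ≠ 0) (v : Fin n → ℝ) : ∑ i, (Pmat n *ᵥ v) i = 0 := by
  simp [Pmat_mulVec_apply, sum_sub_distrib, hn]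

lemma sum_sq_Pmat_mulVec_le (hn : n ≠ 0) (v : Fin n → ℝ) :
    ∑ i, (Pmat n *ᵥ v) i ^ 2 ≤ ∑ i, v i ^ 2 := by
  have hn' : (n : ℝ) ≠ 0 := Nat.cast_ne_zero.2 hn
  have h : ∑ i, (Pmat n *ᵥ v) i ^ 2 = ∑ i, v i ^ 2 - (∑ i, v i) ^ 2 / n := by
    simp only [Pmat_mulVec_apply, sub_sq, sum_add_distrib, sum_sub_distrib, ← sum_mul,
      sum_const, card_univ, Fintype.card_fin, nsmul_eq_mul]
    field_simp
    rw [← mul_sum]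
    ring
  rw [h]
  linarith [div_nonneg (sq_nonneg (∑ i, v i)) (Nat.cast_nonneg (α := ℝ) n)]

lemma dotProduct_smul_one_mulVec (t : ℝ) (x : Fin n → ℝ) :
    x ⬝ᵥ (t • 1 : Matrix (Fin n) (Fin n) ℝ) *ᵥ x = t * ∑ i, x i ^ 2 := by
  rw [smul_mulVec, one_mulVec, dotProduct_smul, smul_eq_mul, dotProduct]
  simp only [sq]

lemma dotProduct_smul_one_sub_Pmat_mul_mulVec (z : ℝ) (B : Matrix (Fin n) (Fin n) ℝ)
    (v : Fin n → ℝ) :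
    v ⬝ᵥ (z • 1 - Pmat n * B * Pmat n) *ᵥ v
      = z * ∑ i, v i ^ 2 - (Pmat n *ᵥ v) ⬝ᵥ B *ᵥ (Pmat n *ᵥ v) := by
  rw [sub_mulVec, dotProduct_sub, dotProduct_smul_one_mulVec, ← mulVec_mulVec, ← mulVec_mulVec,
    dotProduct_mulVec, ← mulVec_transpose, isSymm_Pmat.eq]

lemma dotProduct_mulVec_le_of_posSemidef {z : ℝ} {B : Matrix (Fin n) (Fin n) ℝ}
    (h : (z • 1 - Pmat n * B * Pmat n).PosSemidef) {x : Fin n → ℝ} (hx : ∑ i, x i = 0) :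
    x ⬝ᵥ B *ᵥ x ≤ z * ∑ i, x i ^ 2 := by
  have := h.dotProduct_mulVec_nonneg x
  rw [star_trivial, dotProduct_smul_one_sub_Pmat_mul_mulVec, Pmat_mulVec_of_sum_eq_zero hx] at this
  linarith

lemma posSemidef_of_forall_dotProduct_mulVec_le (hn : n ≠ 0) {z : ℝ}
    {B : Matrix (Fin n) (Fin n) ℝ} (hB : B.IsSymm) (hz : 0 ≤ z)
    (h : ∀ x : Fin n → ℝ, ∑ i, x i = 0 → x ⬝ᵥ B *ᵥ x ≤ z * ∑ i, x i ^ 2) :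
    (z • 1 - Pmat n * B * Pmat n).PosSemidef := by
  refine .of_dotProduct_mulVec_nonneg ?_ fun v => ?_
  · have hPBP : (Pmat n * B * Pmat n).IsSymm := by
      simp [IsSymm, transpose_mul, hB.eq, isSymm_Pmat.eq, Matrix.mul_assoc]
    exact isHermitian_iff_isSymm.2 ((isSymm_one.smul z).sub hPBP)
  · rw [star_trivial, dotProduct_smul_one_sub_Pmat_mul_mulVec, sub_nonneg]
    calc (Pmat n *ᵥ v) ⬝ᵥ B *ᵥ (Pmat n *ᵥ v) ≤ z * ∑ i, (Pmat n *ᵥ v) i ^ 2 :=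
          h _ (sum_Pmat_mulVec hn v)
      _ ≤ z * ∑ i, v i ^ 2 := mul_le_mul_of_nonneg_left (sum_sq_Pmat_mulVec_le hn v) hz

end Projection

section Graph

variable {n : ℕ} (G : SimpleGraph (Fin n)) [DecidableRel G.Adj]

def reducedObjective (d : Fin n → ℝ) : ℝ := n * lamS (adjA G + diagonal d) - ∑ i, d i

lemma isSymm_adjA : (adjA G).IsSymm := G.isSymm_adjMatrix

lemma msum_adjA : msum (adjA G) = 2 * edgeCount G := by
  have hrow : ∀ i, ∑ j, adjA G i j = G.degree i := fun i => by
    have := G.adjMatrix_mulVec_const_apply (α := ℝ) (a := 1) (v := i)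
    simp only [mulVec, dotProduct, Function.const_apply, mul_one] at this
    exact this
  simp only [msum, hrow]
  exact_mod_cast G.sum_degrees_eq_twice_card_edges

lemma gB_eq (d : Fin n → ℝ) : gB G d = edgeCount G / 2 - reducedObjective G d / 4 := by
  have hmsum : msum (adjA G + diagonal d) = msum (adjA G) + ∑ i, d i := by
    simp [msum, sum_add_distrib, diagonal_apply]
  rw [gB, hmsum, msum_adjA, reducedObjective]
  ring

lemma neg_le_reducedObjective (hn : 2 ≤ n) (d : Fin n → ℝ) : -n ≤ reducedObjective G d := by
  set σ := finRotate n
  have hσ : ∀ i, σ i ≠ i := fun i =>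
    Equiv.Perm.mem_support.1 (by simp [σ, support_finRotate_of_le hn])
  have hadj : ∀ j k, adjA G j k ≤ 1 := fun j k => by
    simp only [adjA, of_apply]
    split_ifs <;> norm_num
  have hpair : ∀ i, (d i + d (σ i)) / 2 - 1 ≤ lamS (adjA G + diagonal d) := fun i => by
    refine le_trans ?_ (diag_sub_offDiag_le_lamS _ (hσ i).symm)
    have hloop : ∀ j, adjA G j j = 0 := fun j => by simp [adjA]
    simp only [Matrix.add_apply, diagonal_apply_eq, diagonal_apply_ne _ (hσ i),
      diagonal_apply_ne _ (hσ i).symm, hloop]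
    linarith [hadj i (σ i), hadj (σ i) i]
  rw [reducedObjective, le_sub_iff_add_le, neg_add_eq_sub]
  calc ∑ i, d i - n = ∑ i, ((d i + d (σ i)) / 2 - 1) := by
        rw [sum_sub_distrib, ← sum_div, sum_add_distrib, Equiv.sum_comp]
        simp
    _ ≤ ∑ _i, lamS (adjA G + diagonal d) := sum_le_sum fun i _ => hpair i
    _ = n * lamS (adjA G + diagonal d) := by simp

lemma pSDP_eq_iInf (hn : 2 ≤ n) :
    pSDP G = ⨅ d, reducedObjective G d := by
  refine csInf_eq_csInf_of_forall_exists_le ?_ ?_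
  · rintro _ ⟨z, d, hpsd, rfl⟩
    have := lamS_le_of_forall _ hn fun x hx => dotProduct_mulVec_le_of_posSemidef hpsd hx
    exact ⟨_, ⟨d, rfl⟩, sub_le_sub_right (mul_le_mul_of_nonneg_left this n.cast_nonneg) _⟩
  · rintro _ ⟨d, rfl⟩
    set B := adjA G + diagonal d
    set t := |lamS B|
    have hshift : adjA G + diagonal (d + fun _ => t) = B + t • 1 := by
      rw [smul_one_eq_diagonal, add_assoc, diagonal_add]
      rfl
    have hsymm : (B + t • 1).IsSymm :=
      ((isSymm_adjA G).add (isSymm_diagonal d)).add (isSymm_one.smul t)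
    refine ⟨_, ⟨lamS B + t, d + fun _ => t, ?_, rfl⟩, ?_⟩
    · rw [hshift]
      refine posSemidef_of_forall_dotProduct_mulVec_le (by omega) hsymm
        (by linarith [neg_abs_le (lamS B)]) fun x hx => ?_
      rw [add_mulVec, dotProduct_add, dotProduct_smul_one_mulVec]
      linarith [dotProduct_mulVec_le_lamS_mul B hx]
    · simp [reducedObjective, B, sum_add_distrib]
      linarith

end Graph

theorem h_eq_primal_sdp_general {n : ℕ} (hn2 : 2 ≤ n)
    (G : SimpleGraph (Fin n)) [DecidableRel G.Adj] :
    hB G = (edgeCount G : ℝ) / 2 - pSDP G / 4 := by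
  have hbdd : BddBelow (Set.range (reducedObjective G)) :=
    ⟨-n, by rintro _ ⟨d, rfl⟩; exact neg_le_reducedObjective G hn2 d⟩
  have hanti : Antitone fun p : ℝ => (edgeCount G : ℝ) / 2 - p / 4 := fun a b hab => by
    dsimp only; linarith
  rw [pSDP_eq_iInf G hn2, hanti.map_ciInf_of_continuousAt (by fun_prop) hbdd, hB]
  exact congrArg sSup (Set.ext fun r => exists_congr fun d => by rw [gB_eq, eq_comm])

/-- `h(G) = |E|/2 - p(G)/4`. -/
theorem h_eq_primal_sdp {n : ℕ} (hn2 : 2 ≤ n) (hne : Even n)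
    (G : SimpleGraph (Fin n)) [DecidableRel G.Adj] :
    hB G = (edgeCount G : ℝ) / 2 - pSDP G / 4 :=
  h_eq_primal_sdp_general hn2 G
end
end

section
/- For every graph G, the Feige–Kilian primal SDP value h_p(G) equals |E|/2 − d(G)/4, where h_p(G) = inf { ∑_{{i,j}∈E, i<j} (1 − Y_{ij})/2 : Y ∈ ℝ^{n×n} symmetric positive semidefinite, Y_{ii} = 1 for all i, and ∑_{i,j} Y_{ij} = 0 } and d(G) = sup { (P·A·P) • Y : Y ∈ ℝ^{n×n} symmetric positive semidefinite, tr(Y) = n, and (P·Y·P)_{ii} = 1 for every i }. -/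
open Matrix BigOperators Finset

noncomputable section

/-- The dual SDP value `d(G)` for Boppana's optimization. -/
def dSDP {n : ℕ} (G : SimpleGraph (Fin n)) [DecidableRel G.Adj] : ℝ :=
  sSup {r | ∃ Y : Matrix (Fin n) (Fin n) ℝ, Y.PosSemidef ∧
    Y.trace = (n : ℝ) ∧ (∀ i, (Pmat n * Y * Pmat n) i i = 1) ∧
    r = ∑ i, ∑ j, (Pmat n * adjA G * Pmat n) i j * Y i j}

/-- The Feige–Kilian primal SDP value `h_p(G)`. -/
def hP {n : ℕ} (G : SimpleGraph (Fin n)) [DecidableRel G.Adj] : ℝ :=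
  sInf {r | ∃ Y : Matrix (Fin n) (Fin n) ℝ, Y.PosSemidef ∧
    (∀ i, Y i i = 1) ∧ (∑ i, ∑ j, Y i j) = 0 ∧
    r = ∑ i, ∑ j, if i < j then adjA G i j * (1 - Y i j) / 2 else 0}

/-!
For `Y` with `Y 1 = 0` we have `P Y P = Y`, while for any `Y ⪰ 0` the matrix `P Y P` is positive
semidefinite with `P Y P 1 = 0`; and `(P A P) • Y = A • (P Y P)`. Hence `Y ↦ P Y P` maps the feasible
set of `d(G)` onto that of `h_p(G)`, on which the primal objective is `|E|/2 - (A • Y)/4`. So the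
primal values are the image of the dual values under the decreasing map `s ↦ |E|/2 - s/4`, and
the infimum of the image is the image of the supremum. Both sets are nonempty because
`n/(n-1) • P` is primal feasible once `n ≥ 2`.
-/

section Matrices

variable {m n p q : Type*} [Fintype m] [Fintype n] [Fintype p]

theorem Matrix.sum_sum_mul_apply_eq_trace {R : Type*} [CommSemiring R] (M N : Matrix m n R) :
    ∑ i, ∑ j, M i j * N i j = (M * Nᵀ).trace := by
  simp [Matrix.trace, Matrix.mul_apply]

theorem Matrix.sum_sum_mul_mul_apply_mul [Fintype q] {R : Type*} [CommSemiring R]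
    (A : Matrix n p R) (B : Matrix m n R) (C : Matrix p q R) (Y : Matrix m q R) :
    ∑ i, ∑ j, (B * A * C) i j * Y i j = ∑ i, ∑ j, A i j * (Bᵀ * Y * Cᵀ) i j := by
  simp only [sum_sum_mul_apply_eq_trace, transpose_mul, transpose_transpose, Matrix.mul_assoc]
  rw [trace_mul_comm B]
  simp only [Matrix.mul_assoc]

theorem Matrix.sum_sum_apply_eq_sum_mulVec_one {R : Type*} [NonAssocSemiring R]
    (M : Matrix m n R) : ∑ i, ∑ j, M i j = ∑ i, (M *ᵥ 1) i := by
  simp [mulVec, dotProduct]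

open scoped ComplexOrder in
theorem Matrix.PosSemidef.mulVec_one_eq_zero {𝕜 : Type*} [RCLike 𝕜] {Y : Matrix n n 𝕜}
    (hY : Y.PosSemidef) (h : ∑ i, ∑ j, Y i j = 0) : Y *ᵥ 1 = 0 :=
  (hY.dotProduct_mulVec_zero_iff 1).mp (by simpa [dotProduct, mulVec] using h)

theorem Matrix.PosSemidef.two_mul_apply_le [DecidableEq n] {Y : Matrix n n ℝ}
    (hY : Y.PosSemidef) (i j : n) : 2 * Y i j ≤ Y i i + Y j j := by
  have h := hY.dotProduct_mulVec_nonneg (Pi.single i 1 - Pi.single j 1)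
  have hji : Y j i = Y i j := hY.isHermitian.apply i j
  simp only [star_trivial, mulVec_sub, sub_dotProduct, dotProduct_sub, mulVec_single_one,
    single_one_dotProduct, col_apply] at h
  linarith

end Matrices

theorem Finset.sum_sum_ite_lt_of_symm {ι K : Type*} [Fintype ι] [LinearOrder ι] [Field K]
    [CharZero K] {f : ι → ι → K}
    (hsymm : ∀ i j, f j i = f i j) (hdiag : ∀ i, f i i = 0) :
    ∑ i, ∑ j, (if i < j then f i j else 0) = (∑ i, ∑ j, f i j) / 2 := by
  have hsplit : ∀ i j, f i j = (if i < j then f i j else 0) + (if j < i then f j i else 0) := by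
    intro i j
    rcases lt_trichotomy i j with h | rfl | h
    · simp [h, h.asymm]
    · simp [hdiag]
    · simp [h, h.asymm, hsymm]
  have hswap : ∑ i, ∑ j, (if j < i then f j i else 0) = ∑ i, ∑ j, (if i < j then f i j else 0) :=
    Finset.sum_comm
  rw [Finset.sum_congr rfl fun i _ => Finset.sum_congr rfl fun j _ => hsplit i j]
  simp only [Finset.sum_add_distrib, hswap]
  ring

section Graph

variable {n : ℕ} (G : SimpleGraph (Fin n)) [DecidableRel G.Adj]

theorem adjA_eq_adjMatrix : adjA G = G.adjMatrix ℝ := rfl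

theorem sum_sum_adjA : ∑ i, ∑ j, adjA G i j = 2 * (edgeCount G : ℝ) := by
  have h := G.natCast_card_dart_eq_dotProduct (α := ℝ)
  rw [G.dart_card_eq_twice_card_edges, dotProduct_one] at h
  rw [sum_sum_apply_eq_sum_mulVec_one, adjA_eq_adjMatrix, ← h, edgeCount, Nat.cast_mul,
    Nat.cast_ofNat]

theorem primal_objective_eq {Y : Matrix (Fin n) (Fin n) ℝ} (hY : Y.IsSymm) :
    (∑ i, ∑ j, if i < j then adjA G i j * (1 - Y i j) / 2 else 0)
      = (edgeCount G : ℝ) / 2 - (∑ i, ∑ j, adjA G i j * Y i j) / 4 := by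
  rw [Finset.sum_sum_ite_lt_of_symm (fun i j => by simp [adjA_eq_adjMatrix, G.adj_comm, hY.apply])
    (fun i => by simp [adjA_eq_adjMatrix])]
  simp only [mul_sub, mul_one, sub_div, Finset.sum_sub_distrib, ← Finset.sum_div, sum_sum_adjA]
  ring

end Graph

section Projection

variable {n : ℕ}

theorem Jmat_transpose : (Jmat n)ᵀ = Jmat n := rfl

theorem mul_Jmat_eq_zero {M : Matrix (Fin n) (Fin n) ℝ} (h : M *ᵥ 1 = 0) : M * Jmat n = 0 := by
  ext i j
  simpa [Matrix.mul_apply, Jmat, mulVec, dotProduct] using congrFun h i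

theorem Pmat_transpose : (Pmat n)ᵀ = Pmat n := by
  rw [Pmat, transpose_sub, transpose_one, transpose_smul, Jmat_transpose]

theorem Pmat_apply_self (i : Fin n) : Pmat n i i = 1 - (n : ℝ)⁻¹ := by
  simp [Pmat, Jmat]

theorem Pmat_mulVec_one (hn : (n : ℝ) ≠ 0) : Pmat n *ᵥ 1 = 0 := by
  ext i
  simp [Pmat, Jmat, mulVec, dotProduct, Matrix.one_apply, hn]

theorem Pmat_mul_self (hn : (n : ℝ) ≠ 0) : Pmat n * Pmat n = Pmat n := by
  conv_lhs => arg 2; rw [Pmat]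
  rw [mul_sub, mul_one, mul_smul_comm, mul_Jmat_eq_zero (Pmat_mulVec_one hn), smul_zero, sub_zero]

theorem Pmat_posSemidef (hn : (n : ℝ) ≠ 0) : (Pmat n).PosSemidef := by
  simpa [Pmat_transpose, Pmat_mul_self hn] using posSemidef_conjTranspose_mul_self (Pmat n)

theorem Pmat_mul_mul_Pmat_mulVec_one (hn : (n : ℝ) ≠ 0) (Y : Matrix (Fin n) (Fin n) ℝ) :
    (Pmat n * Y * Pmat n) *ᵥ 1 = 0 := by
  rw [← mulVec_mulVec, Pmat_mulVec_one hn, mulVec_zero]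

theorem Pmat_mul_mul_Pmat_of_mulVec_one {Y : Matrix (Fin n) (Fin n) ℝ} (hY : Y.IsSymm)
    (h : Y *ᵥ 1 = 0) : Pmat n * Y * Pmat n = Y := by
  have hYJ : Y * Jmat n = 0 := mul_Jmat_eq_zero h
  have hJY : Jmat n * Y = 0 := by
    rw [← Jmat_transpose, ← hY.eq, ← transpose_mul, hYJ, transpose_zero]
  simp only [Pmat, sub_mul, mul_sub, one_mul, mul_one, smul_mul_assoc, mul_smul_comm, hJY, hYJ,
    smul_zero, sub_zero]

end Projection

section Values

variable {n : ℕ} (G : SimpleGraph (Fin n)) [DecidableRel G.Adj]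

def primalValues : Set ℝ :=
  {r | ∃ Y : Matrix (Fin n) (Fin n) ℝ, Y.PosSemidef ∧
    (∀ i, Y i i = 1) ∧ (∑ i, ∑ j, Y i j) = 0 ∧
    r = ∑ i, ∑ j, if i < j then adjA G i j * (1 - Y i j) / 2 else 0}

def dualValues : Set ℝ :=
  {r | ∃ Y : Matrix (Fin n) (Fin n) ℝ, Y.PosSemidef ∧
    Y.trace = (n : ℝ) ∧ (∀ i, (Pmat n * Y * Pmat n) i i = 1) ∧
    r = ∑ i, ∑ j, (Pmat n * adjA G * Pmat n) i j * Y i j}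

theorem primalValues_eq_image (hn : (n : ℝ) ≠ 0) :
    primalValues G = (fun s => (edgeCount G : ℝ) / 2 - s / 4) '' dualValues G := by
  ext r
  constructor
  · rintro ⟨Y, hY, hdiag, hsum, rfl⟩
    have hsymm : Y.IsSymm := isHermitian_iff_isSymm.mp hY.isHermitian
    have hPYP := Pmat_mul_mul_Pmat_of_mulVec_one hsymm (hY.mulVec_one_eq_zero hsum)
    refine ⟨_, ⟨Y, hY, by simp [trace, hdiag], fun i => by rw [hPYP]; exact hdiag i, rfl⟩, ?_⟩
    rw [sum_sum_mul_mul_apply_mul, Pmat_transpose, hPYP, primal_objective_eq G hsymm]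
  · rintro ⟨_, ⟨Y, hY, -, hdiag, rfl⟩, rfl⟩
    have hZ : (Pmat n * Y * Pmat n).PosSemidef := by
      simpa [Pmat_transpose] using hY.mul_mul_conjTranspose_same (Pmat n)
    refine ⟨_, hZ, hdiag, ?_, ?_⟩
    · simp [sum_sum_apply_eq_sum_mulVec_one, Pmat_mul_mul_Pmat_mulVec_one hn]
    · rw [primal_objective_eq G (isHermitian_iff_isSymm.mp hZ.isHermitian),
        sum_sum_mul_mul_apply_mul, Pmat_transpose]

theorem nonneg_of_mem_primalValues {r : ℝ} (hr : r ∈ primalValues G) : 0 ≤ r := by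
  obtain ⟨Y, hY, hdiag, -, rfl⟩ := hr
  refine sum_nonneg fun i _ => sum_nonneg fun j _ => ?_
  split_ifs
  · have hYij : 0 ≤ 1 - Y i j := by linarith [hY.two_mul_apply_le i j, hdiag i, hdiag j]
    have hA : 0 ≤ adjA G i j := by simp only [adjA, of_apply]; positivity
    positivity
  · rfl

theorem primalValues_nonempty (hn : 2 ≤ n) : (primalValues G).Nonempty := by
  have hn' : (2 : ℝ) ≤ n := by exact_mod_cast hn
  have hn0 : (n : ℝ) ≠ 0 := by positivity
  refine ⟨_, ((n : ℝ) / (n - 1)) • Pmat n,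
    (Pmat_posSemidef hn0).smul (div_nonneg (by linarith) (by linarith)), fun i => ?_, ?_, rfl⟩
  · rw [Matrix.smul_apply, Pmat_apply_self, smul_eq_mul]
    have : (n : ℝ) - 1 ≠ 0 := by linarith
    field_simp
  · simp [← mul_sum, sum_sum_apply_eq_sum_mulVec_one, Pmat_mulVec_one hn0]

end Values

theorem feige_kilian_primal_eq_boppana_dual_general {n : ℕ} (hn2 : 2 ≤ n)
    (G : SimpleGraph (Fin n)) [DecidableRel G.Adj] :
    hP G = (edgeCount G : ℝ) / 2 - dSDP G / 4 := by
  have hn : (n : ℝ) ≠ 0 := by positivity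
  set f : ℝ → ℝ := fun s => (edgeCount G : ℝ) / 2 - s / 4
  have hf : Antitone f := fun a b hab => by simp only [f]; linarith
  have himage := primalValues_eq_image G hn
  have hne : (dualValues G).Nonempty := by
    simpa [himage] using primalValues_nonempty G hn2
  have hbdd : BddAbove (dualValues G) := ⟨2 * edgeCount G, fun s hs => by
    have := nonneg_of_mem_primalValues G (himage ▸ Set.mem_image_of_mem f hs)
    simp only [f] at this
    linarith⟩
  change sInf (primalValues G) = f (sSup (dualValues G))
  rw [himage, hf.map_csSup_of_continuousAt (by fun_prop) hne hbdd]

/-- `h_p(G) = |E|/2 - d(G)/4`. -/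
theorem feige_kilian_primal_eq_boppana_dual {n : ℕ} (hn2 : 2 ≤ n) (hne : Even n)
    (G : SimpleGraph (Fin n)) [DecidableRel G.Adj] :
    hP G = (edgeCount G : ℝ) / 2 - dSDP G / 4 :=
  feige_kilian_primal_eq_boppana_dual_general hn2 G
end
end
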